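/- If P(z) is a polynomial of degree n and Q(z) = zⁿ·conj(P(1/conj(z))) is its conjugate reciprocal polynomial, then for every R ≥ 1 and all z with |z| ≥ 1: |R·P'(Rz) − P'(z)| + |R·Q'(Rz) − Q'(z)| ≤ n·(Rⁿ − 1)·|z|^{n−1} · max_{|w|=1} |P(w)|. -/

import Mathlib

/-!
Let `h*(z) = zⁿ conj (h (1 / conj z))`. If `deg h ≤ n` and `h` has no zeros in the closed unit
disk, then `|R h'(Rz) - h'(z)| ≤ |R h*'(Rz) - h*'(z)|` for `|z| ≥ 1`. Otherwise let `μ` be the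
ratio of the two sides, so `|μ| < 1`. Since `|h| ≤ |h*|` outside the disk, `g = h* - μ h` has
all its zeros in the closed disk, hence so does `g'` (Gauss–Lucas). Then `|g'(z)| ≤ |g'(Rz)|`,
factor by factor, so `R g'(Rz) - g'(z) ≠ 0`, although it vanishes by the choice of `μ`.

Apply this to `h = P - c` with `|c| = t > max_{|w|=1} |P(w)|`. The polynomial `h*` is
`Q - c̄ zⁿ`, and the phase of `c` can be chosen so that the `c̄ zⁿ` term points opposite to
`R Q'(Rz) - Q'(z)`. This gives `|R P'(Rz) - P'(z)| ≤ | |R Q'(Rz) - Q'(z)| - n (Rⁿ - 1) |z|ⁿ⁻¹ t |`.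
The same holds with `P` and `Q` swapped. Together the two inequalities force the sum bound,
and then we let `t` decrease to the maximum.
-/

/-- The maximum of `|P(w)|` over the unit circle `|w| = 1`. -/
noncomputable def maxMod (P : Polynomial ℂ) : ℝ :=
  sSup ((fun w => ‖P.eval w‖) '' {w : ℂ | ‖w‖ = 1})

/-- The conjugate reciprocal polynomial `Q(z) = z^n * conj (P (1 / conj z))`. -/
noncomputable def recipPoly (P : Polynomial ℂ) : Polynomial ℂ :=
  (P.map (starRingEnd ℂ)).reverse

open Polynomial Metric ComplexConjugate

/-- `f*` relative to a fixed degree bound `n` rather than to `natDegree f` as in `recipPoly`,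
so that `f ↦ f*` is additive. -/
noncomputable def conjReflect (n : ℕ) (f : ℂ[X]) : ℂ[X] := (f.map (starRingEnd ℂ)).reflect n

section conjReflect

variable {n : ℕ} {f : ℂ[X]}

lemma recipPoly_eq_conjReflect (hf : f.natDegree = n) : recipPoly f = conjReflect n f := by
  rw [recipPoly, conjReflect, reverse, natDegree_map, hf]

lemma coeff_conjReflect (k : ℕ) : (conjReflect n f).coeff k = conj (f.coeff (revAt n k)) := by
  simp [conjReflect, coeff_reflect]

@[simp] lemma conjReflect_conjReflect : conjReflect n (conjReflect n f) = f := by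
  ext k
  simp [coeff_conjReflect, revAt_invol]

lemma natDegree_conjReflect_le (hf : f.natDegree ≤ n) : (conjReflect n f).natDegree ≤ n :=
  natDegree_reflect_le.trans (by simpa [natDegree_map])

lemma conjReflect_sub_C (c : ℂ) :
    conjReflect n (f - C c) = conjReflect n f - C (conj c) * X ^ n := by
  simp [conjReflect, reflect_sub, reflect_C]

lemma eval_conjReflect (hf : f.natDegree ≤ n) {z : ℂ} (hz : z ≠ 0) :
    (conjReflect n f).eval z = z ^ n * conj (f.eval (conj z)⁻¹) := by
  have : Invertible z⁻¹ := invertibleOfNonzero (inv_ne_zero hz)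
  have h := eval₂_reflect_mul_pow (RingHom.id ℂ) z⁻¹ n (f.map (starRingEnd ℂ))
    (by rwa [natDegree_map])
  have hmap : (f.map (starRingEnd ℂ)).eval z⁻¹ = conj (f.eval (conj z)⁻¹) := by
    rw [eval_map, ← eval₂_hom, map_inv₀, Complex.conj_conj]
  simp only [invOf_eq_inv, inv_inv, eval₂_id, hmap] at h
  rw [conjReflect, ← h, mul_comm, mul_assoc, ← mul_pow, inv_mul_cancel₀ hz, one_pow, mul_one]

lemma norm_eval_conjReflect_of_norm_eq_one (hf : f.natDegree ≤ n) {z : ℂ} (hz : ‖z‖ = 1) :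
    ‖(conjReflect n f).eval z‖ = ‖f.eval z‖ := by
  have hz0 : z ≠ 0 := by rintro rfl; simp at hz
  rw [eval_conjReflect hf hz0, norm_mul, norm_pow, hz, one_pow, one_mul, Complex.norm_conj,
    ← Complex.inv_eq_conj hz, inv_inv]

end conjReflect

lemma norm_le_of_forall_norm_eq_one {f : ℂ → ℂ} (hf : DifferentiableOn ℂ f (closedBall 0 1))
    {B : ℝ} (hB : ∀ w : ℂ, ‖w‖ = 1 → ‖f w‖ ≤ B) {z : ℂ} (hz : ‖z‖ ≤ 1) : ‖f z‖ ≤ B := by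
  refine Complex.norm_le_of_forall_mem_frontier_norm_le isBounded_ball
    (hf.diffContOnCl_ball le_rfl) (fun w hw => hB w ?_) ?_
  · simpa [frontier_ball (0 : ℂ) one_ne_zero] using hw
  · simpa [closure_ball (0 : ℂ) one_ne_zero] using hz

lemma le_of_forall_one_lt_norm {E : Type*} [NormedAddCommGroup E] [NormedSpace ℝ E]
    [Nontrivial E] {F G : E → ℝ} (hF : Continuous F) (hG : Continuous G)
    (h : ∀ w, 1 < ‖w‖ → F w ≤ G w) {z : E} (hz : 1 ≤ ‖z‖) : F z ≤ G z := by
  have hcl : closure {w : E | 1 < ‖w‖} = {w | 1 ≤ ‖w‖} := by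
    have : {w : E | 1 < ‖w‖} = (closedBall 0 1)ᶜ := by ext; simp
    rw [this, closure_compl, interior_closedBall _ one_ne_zero]
    ext; simp
  exact closure_minimal (fun w hw => h w hw) (isClosed_le hF hG) (hcl ▸ hz)

lemma norm_sub_le_norm_smul_sub {E : Type*} [NormedAddCommGroup E] [InnerProductSpace ℝ E]
    {x y : E} (hxy : ‖y‖ ≤ ‖x‖) {R : ℝ} (hR : 1 ≤ R) : ‖x - y‖ ≤ ‖R • x - y‖ := by
  have hsplit : R • x - y = (x - y) + (R - 1) • x := by
    rw [sub_smul, one_smul]; abel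
  rw [← sq_le_sq₀ (norm_nonneg _) (norm_nonneg _), hsplit, norm_add_sq_real, norm_smul,
    inner_smul_right, inner_sub_left, real_inner_self_eq_norm_sq, Real.norm_eq_abs,
    abs_of_nonneg (by linarith)]
  have := real_inner_le_norm y x
  nlinarith [norm_nonneg x, norm_nonneg y, mul_le_mul_of_nonneg_right hxy (norm_nonneg x)]

lemma mem_of_eval_derivative_eq_zero {P : ℂ[X]} (hP : 0 < P.degree) {s : Set ℂ} (hs : Convex ℝ s)
    (hroots : ∀ w, P.eval w = 0 → w ∈ s) {z : ℂ} (hz : (derivative P).eval z = 0) : z ∈ s := by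
  have hP' : derivative P ≠ 0 := by
    rw [Ne, derivative_eq_zero, ← Ne, ← pos_iff_ne_zero, natDegree_pos_iff_degree_pos]
    exact hP
  refine convexHull_min (fun w hw => hroots w ?_) hs
    (rootSet_derivative_subset_convexHull_rootSet hP (mem_rootSet.2 ⟨hP', by simpa⟩))
  simpa using (mem_rootSet.1 hw).2

lemma norm_eval_le_norm_eval_mul {f : ℂ[X]} (hroots : ∀ w, f.eval w = 0 → ‖w‖ ≤ 1) {R : ℝ}
    (hR : 1 ≤ R) {z : ℂ} (hz : 1 ≤ ‖z‖) : ‖f.eval z‖ ≤ ‖f.eval (R * z)‖ := by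
  have hsplit := IsAlgClosed.splits f
  rw [hsplit.eval_eq_prod_roots, hsplit.eval_eq_prod_roots, norm_mul, norm_mul]
  gcongr
  rw [← normHom_apply, ← normHom_apply, map_multiset_prod, map_multiset_prod, Multiset.map_map,
    Multiset.map_map]
  simp only [Function.comp_def, normHom_apply]
  refine Multiset.prod_map_le_prod_map₀ _ _ (fun _ _ => norm_nonneg _) fun r hr => ?_
  rw [← Complex.real_smul]
  exact norm_sub_le_norm_smul_sub ((hroots r (isRoot_of_mem_roots hr)).trans hz) hR

lemma mul_eval_mul_sub_eval_ne_zero {f : ℂ[X]} (hroots : ∀ w, f.eval w = 0 → ‖w‖ ≤ 1) {R : ℝ}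
    (hR : 1 < R) {z : ℂ} (hz : 1 < ‖z‖) : R * f.eval (R * z) - f.eval z ≠ 0 := by
  have hfz : 0 < ‖f.eval z‖ := norm_pos_iff.2 fun h => (hroots z h).not_gt hz
  refine sub_ne_zero.2 fun heq => ?_
  have := norm_eval_le_norm_eval_mul hroots hR.le hz.le
  have := congrArg norm heq
  rw [norm_mul, Complex.norm_real, Real.norm_eq_abs, abs_of_pos (by linarith)] at this
  nlinarith

noncomputable def dilDerivSub (R : ℂ) (f : ℂ[X]) (z : ℂ) : ℂ :=
  R * (derivative f).eval (R * z) - (derivative f).eval z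

section dilDerivSub

variable {R z : ℂ}

lemma dilDerivSub_sub (f g : ℂ[X]) :
    dilDerivSub R (f - g) z = dilDerivSub R f z - dilDerivSub R g z := by
  simp only [dilDerivSub, derivative_sub, eval_sub]; ring

lemma dilDerivSub_C_mul (a : ℂ) (f : ℂ[X]) :
    dilDerivSub R (C a * f) z = a * dilDerivSub R f z := by
  simp only [dilDerivSub, derivative_C_mul, eval_mul, eval_C]; ring

@[simp] lemma dilDerivSub_C (a : ℂ) : dilDerivSub R (C a) z = 0 := by
  simp [dilDerivSub]

lemma dilDerivSub_X_pow (n : ℕ) : dilDerivSub R (X ^ n) z = n * (R ^ n - 1) * z ^ (n - 1) := by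
  rcases n with _ | n
  · simp [dilDerivSub]
  · simp only [dilDerivSub, derivative_X_pow, eval_mul, eval_C, eval_pow, eval_X,
      Nat.add_sub_cancel]
    push_cast
    ring

@[simp] lemma dilDerivSub_one_left (f : ℂ[X]) : dilDerivSub 1 f z = 0 := by
  simp [dilDerivSub]

lemma continuous_dilDerivSub (R : ℂ) (f : ℂ[X]) : Continuous (dilDerivSub R f) :=
  (continuous_const.mul ((derivative f).continuous.comp (continuous_const_mul R))).sub
    (derivative f).continuous

end dilDerivSub

section NoZerosInDisk

variable {n : ℕ} {h : ℂ[X]}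

/-- The quotient `h* / h` is holomorphic on the closed disk and unimodular on its boundary. -/
lemma norm_eval_conjReflect_le (hdeg : h.natDegree ≤ n)
    (hfree : ∀ w : ℂ, ‖w‖ ≤ 1 → h.eval w ≠ 0) {w : ℂ} (hw : ‖w‖ ≤ 1) :
    ‖(conjReflect n h).eval w‖ ≤ ‖h.eval w‖ := by
  have hquot : ‖(conjReflect n h).eval w / h.eval w‖ ≤ 1 := by
    refine norm_le_of_forall_norm_eq_one (f := fun x => (conjReflect n h).eval x / h.eval x) ?_
      (fun x hx => ?_) hw
    · exact (conjReflect n h).differentiable.differentiableOn.div h.differentiable.differentiableOn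
        fun x hx => hfree x (mem_closedBall_zero_iff.1 hx)
    · rw [norm_div, norm_eval_conjReflect_of_norm_eq_one hdeg hx]
      exact div_self_le_one _
  rwa [norm_div, div_le_one (norm_pos_iff.2 (hfree w hw))] at hquot

lemma norm_eval_le_norm_eval_conjReflect (hdeg : h.natDegree ≤ n)
    (hfree : ∀ w : ℂ, ‖w‖ ≤ 1 → h.eval w ≠ 0) {z : ℂ} (hz : 1 < ‖z‖) :
    (conjReflect n h).eval z ≠ 0 ∧ ‖h.eval z‖ ≤ ‖(conjReflect n h).eval z‖ := by
  have hz0 : z ≠ 0 := norm_pos_iff.1 (one_pos.trans hz)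
  have hw : ‖(conj z)⁻¹‖ ≤ 1 := by
    rw [norm_inv, Complex.norm_conj]
    exact inv_le_one_of_one_le₀ hz.le
  have hh := eval_conjReflect (natDegree_conjReflect_le hdeg) hz0
  rw [conjReflect_conjReflect] at hh
  rw [hh, eval_conjReflect hdeg hz0]
  refine ⟨mul_ne_zero (pow_ne_zero n hz0) ((_root_.map_ne_zero _).2 (hfree _ hw)), ?_⟩
  simp only [norm_mul, norm_pow, Complex.norm_conj]
  gcongr
  exact norm_eval_conjReflect_le hdeg hfree hw

lemma le_natDegree_conjReflect_sub_C_mul (hdeg : h.natDegree ≤ n)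
    (hfree : ∀ w : ℂ, ‖w‖ ≤ 1 → h.eval w ≠ 0) {μ : ℂ} (hμ : ‖μ‖ < 1) :
    n ≤ (conjReflect n h - C μ * h).natDegree := by
  have h0 : h.coeff 0 ≠ 0 := by simpa [coeff_zero_eq_eval_zero] using hfree 0 (by simp)
  -- the top coefficient `conj h₀ - μ hₙ` is nonzero because `‖hₙ‖ = ‖h*(0)‖ ≤ ‖h(0)‖ = ‖h₀‖`
  have hlead := norm_eval_conjReflect_le hdeg hfree (w := 0) (by simp)
  rw [← coeff_zero_eq_eval_zero, ← coeff_zero_eq_eval_zero, coeff_conjReflect, revAt_zero,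
    Complex.norm_conj] at hlead
  refine le_natDegree_of_ne_zero fun hcoeff => ?_
  rw [coeff_sub, coeff_C_mul, coeff_conjReflect, revAt_le le_rfl, Nat.sub_self,
    sub_eq_zero] at hcoeff
  have hnorm := congrArg norm hcoeff
  rw [Complex.norm_conj, norm_mul] at hnorm
  have := norm_pos_iff.2 h0
  nlinarith [norm_nonneg μ]

lemma eval_conjReflect_sub_C_mul_ne_zero (hdeg : h.natDegree ≤ n)
    (hfree : ∀ w : ℂ, ‖w‖ ≤ 1 → h.eval w ≠ 0) {μ : ℂ} (hμ : ‖μ‖ < 1) {z : ℂ} (hz : 1 < ‖z‖) :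
    (conjReflect n h - C μ * h).eval z ≠ 0 := by
  obtain ⟨hne, hle⟩ := norm_eval_le_norm_eval_conjReflect hdeg hfree hz
  rw [eval_sub, eval_mul, eval_C, sub_ne_zero]
  intro heq
  have hnorm := congrArg norm heq
  rw [norm_mul] at hnorm
  have := norm_pos_iff.2 hne
  nlinarith [norm_nonneg μ]

lemma norm_dilDerivSub_le_of_one_lt_norm (hdeg : h.natDegree ≤ n) (hn : 1 ≤ n)
    (hfree : ∀ w : ℂ, ‖w‖ ≤ 1 → h.eval w ≠ 0) {R : ℝ} (hR : 1 < R) {z : ℂ} (hz : 1 < ‖z‖) :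
    ‖dilDerivSub R h z‖ ≤ ‖dilDerivSub R (conjReflect n h) z‖ := by
  by_contra! hlt
  have hA : dilDerivSub R h z ≠ 0 := norm_pos_iff.1 ((norm_nonneg _).trans_lt hlt)
  set μ := dilDerivSub R (conjReflect n h) z / dilDerivSub R h z
  have hμ : ‖μ‖ < 1 := by
    rwa [norm_div, div_lt_one (norm_pos_iff.2 hA)]
  set g := conjReflect n h - C μ * h
  have hg : 0 < g.degree := natDegree_pos_iff_degree_pos.1
    (hn.trans (le_natDegree_conjReflect_sub_C_mul hdeg hfree hμ))
  have hroots : ∀ w, (derivative g).eval w = 0 → ‖w‖ ≤ 1 := fun w hw =>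
    mem_closedBall_zero_iff.1 <| mem_of_eval_derivative_eq_zero hg (convex_closedBall 0 1)
      (fun v hv => mem_closedBall_zero_iff.2 <| not_lt.1 fun hv' =>
        eval_conjReflect_sub_C_mul_ne_zero hdeg hfree hμ hv' hv) hw
  apply mul_eval_mul_sub_eval_ne_zero hroots hR hz
  change dilDerivSub R g z = 0
  rw [dilDerivSub_sub, dilDerivSub_C_mul, div_mul_cancel₀ _ hA, sub_self]

lemma norm_dilDerivSub_le (hdeg : h.natDegree ≤ n) (hn : 1 ≤ n)
    (hfree : ∀ w : ℂ, ‖w‖ ≤ 1 → h.eval w ≠ 0) {R : ℝ} (hR : 1 ≤ R) {z : ℂ} (hz : 1 ≤ ‖z‖) :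
    ‖dilDerivSub R h z‖ ≤ ‖dilDerivSub R (conjReflect n h) z‖ := by
  rcases hR.eq_or_lt with rfl | hR
  · simp
  exact le_of_forall_one_lt_norm (continuous_dilDerivSub _ _).norm
    (continuous_dilDerivSub _ _).norm
    (fun w hw => norm_dilDerivSub_le_of_one_lt_norm hdeg hn hfree hR hw) hz

end NoZerosInDisk

lemma norm_eval_le_maxMod (P : ℂ[X]) {w : ℂ} (hw : ‖w‖ = 1) : ‖P.eval w‖ ≤ maxMod P := by
  have hbdd : BddAbove ((fun w => ‖P.eval w‖) '' {w : ℂ | ‖w‖ = 1}) := by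
    have : {w : ℂ | ‖w‖ = 1} = sphere 0 1 := by ext; simp
    rw [this]
    exact ((isCompact_sphere 0 1).image (continuous_norm.comp P.continuous)).bddAbove
  exact le_csSup hbdd ⟨w, hw, rfl⟩

lemma add_le_of_le_abs_sub_of_le_abs_sub {x y K : ℝ} (hK : 0 < K) (hx : x ≤ |y - K|)
    (hy : y ≤ |x - K|) : x + y ≤ K := by
  rcases abs_cases (y - K) with ⟨h1, -⟩ | ⟨h1, -⟩ <;>
    rcases abs_cases (x - K) with ⟨h2, -⟩ | ⟨h2, -⟩ <;> linarith

section BoundedOnCircle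

variable {n : ℕ} {A : ℂ[X]} {M R : ℝ} {z : ℂ}

lemma norm_dilDerivSub_le_abs_sub (hdeg : A.natDegree ≤ n) (hn : 1 ≤ n)
    (hA : ∀ w : ℂ, ‖w‖ = 1 → ‖A.eval w‖ ≤ M) (hR : 1 ≤ R) {t : ℝ} (ht : M < t)
    (hz : 1 ≤ ‖z‖) :
    ‖dilDerivSub R A z‖
      ≤ |‖dilDerivSub R (conjReflect n A) z‖ - n * (R ^ n - 1) * ‖z‖ ^ (n - 1) * t| := by
  set B := dilDerivSub R (conjReflect n A) z
  set s := z ^ (n - 1)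
  have hs : s ≠ 0 := pow_ne_zero _ (norm_pos_iff.1 (one_pos.trans_le hz))
  set u := Complex.exp (B.arg * Complex.I)
  have hu : ‖u‖ = 1 := Complex.norm_exp_ofReal_mul_I _
  set c := conj (t * ‖s‖ * u / s)
  have ht0 : 0 < t := (norm_nonneg _).trans_lt ((hA 1 (by simp)).trans_lt ht)
  have hc : ‖c‖ = t := by
    rw [Complex.norm_conj, norm_div, norm_mul, norm_mul, hu, Complex.norm_real, Complex.norm_real,
      norm_norm, Real.norm_of_nonneg ht0.le, mul_one,
      mul_div_cancel_right₀ _ (norm_ne_zero_iff.2 hs)]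
  have hfree : ∀ w : ℂ, ‖w‖ ≤ 1 → (A - C c).eval w ≠ 0 := by
    intro w hw
    rw [eval_sub, eval_C, sub_ne_zero]
    intro heq
    have hAw := norm_le_of_forall_norm_eq_one A.differentiable.differentiableOn hA hw
    rw [heq, hc] at hAw
    exact hAw.not_gt ht
  have key := norm_dilDerivSub_le (natDegree_sub_C.trans_le hdeg) hn hfree hR hz
  rw [dilDerivSub_sub, dilDerivSub_C, sub_zero, conjReflect_sub_C, dilDerivSub_sub,
    dilDerivSub_C_mul, dilDerivSub_X_pow, Complex.conj_conj] at key
  have hB : ‖B‖ * u = B := Complex.norm_mul_exp_arg_mul_I B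
  have hcancel : t * ‖s‖ * u / s * (n * (R ^ n - 1) * s) = t * ‖s‖ * u * (n * (R ^ n - 1)) := by
    field_simp
  have hsub : B - t * ‖s‖ * u / s * (n * (R ^ n - 1) * s)
      = ((‖B‖ - n * (R ^ n - 1) * ‖s‖ * t : ℝ) : ℂ) * u := by
    rw [hcancel]
    push_cast
    linear_combination -hB
  rwa [hsub, norm_mul, hu, mul_one, Complex.norm_real, Real.norm_eq_abs, norm_pow] at key

lemma norm_dilDerivSub_add_le (hdeg : A.natDegree ≤ n) (hn : 1 ≤ n)
    (hA : ∀ w : ℂ, ‖w‖ = 1 → ‖A.eval w‖ ≤ M) (hR : 1 ≤ R) (hz : 1 ≤ ‖z‖) :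
    ‖dilDerivSub R A z‖ + ‖dilDerivSub R (conjReflect n A) z‖
      ≤ n * (R ^ n - 1) * ‖z‖ ^ (n - 1) * M := by
  rcases hR.eq_or_lt with rfl | hR
  · simp
  have hK : 0 < n * (R ^ n - 1) * ‖z‖ ^ (n - 1) := by
    have : 1 < R ^ n := one_lt_pow₀ hR (by omega)
    have : (0 : ℝ) < n := by exact_mod_cast hn
    positivity
  have hA' : ∀ w : ℂ, ‖w‖ = 1 → ‖(conjReflect n A).eval w‖ ≤ M := fun w hw =>
    (norm_eval_conjReflect_of_norm_eq_one hdeg hw).trans_le (hA w hw)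
  have hM : 0 ≤ M := (norm_nonneg _).trans (hA 1 (by simp))
  rw [mul_comm, ← div_le_iff₀ hK]
  refine le_of_forall_gt_imp_ge_of_dense fun t ht => ?_
  rw [div_le_iff₀ hK, mul_comm]
  have hx := norm_dilDerivSub_le_abs_sub hdeg hn hA hR.le ht hz
  have hy := norm_dilDerivSub_le_abs_sub (natDegree_conjReflect_le hdeg) hn hA' hR.le ht hz
  rw [conjReflect_conjReflect] at hy
  exact add_le_of_le_abs_sub_of_le_abs_sub (mul_pos hK (hM.trans_lt ht)) hx hy

end BoundedOnCircle

/-- Corollary 1: for `R ≥ 1` and `|z| ≥ 1`,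
`|R P'(Rz) - P'(z)| + |R Q'(Rz) - Q'(z)| ≤ n (R^n - 1) |z|^(n-1) max_(|w|=1)|P(w)|`. -/
theorem corollary_one (P : Polynomial ℂ) (n : ℕ) (hn : 1 ≤ n)
    (hdeg : P.natDegree = n) (R : ℝ) (hR : 1 ≤ R) :
    ∀ z : ℂ, 1 ≤ ‖z‖ →
      ‖(R : ℂ) * (Polynomial.derivative P).eval ((R : ℂ) * z)
          - (Polynomial.derivative P).eval z‖
        + ‖(R : ℂ) * (Polynomial.derivative (recipPoly P)).eval ((R : ℂ) * z)
          - (Polynomial.derivative (recipPoly P)).eval z‖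
        ≤ (n : ℝ) * (R ^ n - 1) * ‖z‖ ^ (n - 1) * maxMod P := by
  intro z hz
  rw [recipPoly_eq_conjReflect hdeg]
  exact norm_dilDerivSub_add_le hdeg.le hn (fun w hw => norm_eval_le_maxMod P hw) hR hz
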